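/- arXiv:2306.03240 — 2 statements merged into one kernel-verified Lean document; each statement's English description precedes it below -/
import Mathlib

section
/- Let Q: R^d → R^d be an unbiased randomized operator with conic variance ω ≥ 0, i.e., E[Q(v)] = v and E[‖Q(v) − v‖²] ≤ ω‖v‖². For any vectors u, u⋆, ū ∈ R^d, setting u⁺ := u + (1/(1+ω)) Q(ū − u), we have E[‖u⁺ − u⋆‖²] ≤ (1/(1+ω))‖ū − u⋆‖² + (ω/(1+ω))‖u − u⋆‖². -/
open MeasureTheory

theorem compressed_dual_update_contraction (d : ℕ) {Ω : Type*} [MeasurableSpace Ω]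
    (μ : Measure Ω) [IsProbabilityMeasure μ] (ω : ℝ) (hω : 0 ≤ ω)
    (Q : Ω → EuclideanSpace ℝ (Fin d) → EuclideanSpace ℝ (Fin d))
    (hint : ∀ v, Integrable (fun s => Q s v) μ)
    (hint2 : ∀ v, Integrable (fun s => ‖Q s v - v‖ ^ 2) μ)
    (hunbiased : ∀ v, ∫ s, Q s v ∂μ = v)
    (hconic : ∀ v, ∫ s, ‖Q s v - v‖ ^ 2 ∂μ ≤ ω * ‖v‖ ^ 2)
    (u ustar ubar : EuclideanSpace ℝ (Fin d)) :
    ∫ s, ‖(u + (1 / (1 + ω)) • Q s (ubar - u)) - ustar‖ ^ 2 ∂μ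
      ≤ (1 / (1 + ω)) * ‖ubar - ustar‖ ^ 2 + (ω / (1 + ω)) * ‖u - ustar‖ ^ 2 := by
  have hθpos : (0:ℝ) < 1 + ω := by linarith
  set θ : ℝ := 1 / (1 + ω) with hθ
  have hθ0 : 0 < θ := by positivity
  set v : EuclideanSpace ℝ (Fin d) := ubar - u with hv
  set w : EuclideanSpace ℝ (Fin d) := (u - ustar) + θ • v with hw
  have he_int : Integrable (fun s => Q s v - v) μ := (hint v).sub (integrable_const v)
  have he_mean : ∫ s, (Q s v - v) ∂μ = 0 := by
    rw [integral_sub (hint v) (integrable_const v), hunbiased, integral_const]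
    simp
  have key : ∀ s, ‖(u + θ • Q s v) - ustar‖ ^ 2
      = ‖w‖ ^ 2 + 2 * θ * (inner ℝ w (Q s v - v) : ℝ) + θ ^ 2 * ‖Q s v - v‖ ^ 2 := by
    intro s
    have h1 : (u + θ • Q s v) - ustar = w + θ • (Q s v - v) := by
      simp only [hw, hv]; module
    rw [h1, norm_add_sq_real, real_inner_smul_right, norm_smul]
    simp [Real.norm_eq_abs, mul_pow, sq_abs]
    ring
  have hinner_int : Integrable (fun s => 2 * θ * (inner ℝ w (Q s v - v) : ℝ)) μ :=
    (he_int.const_inner w).const_mul _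
  have hsq_int : Integrable (fun s => θ ^ 2 * ‖Q s v - v‖ ^ 2) μ :=
    (hint2 v).const_mul _
  have hsplit : ∫ s, ‖(u + θ • Q s v) - ustar‖ ^ 2 ∂μ
      = ‖w‖ ^ 2 + θ ^ 2 * ∫ s, ‖Q s v - v‖ ^ 2 ∂μ := by
    calc ∫ s, ‖(u + θ • Q s v) - ustar‖ ^ 2 ∂μ
        = ∫ s, (‖w‖ ^ 2 + 2 * θ * (inner ℝ w (Q s v - v) : ℝ) + θ ^ 2 * ‖Q s v - v‖ ^ 2) ∂μ := by
          exact integral_congr_ae (Filter.Eventually.of_forall key)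
      _ = ∫ s, (‖w‖ ^ 2 + 2 * θ * (inner ℝ w (Q s v - v) : ℝ)) ∂μ
            + ∫ s, θ ^ 2 * ‖Q s v - v‖ ^ 2 ∂μ :=
          integral_add ((integrable_const _).add hinner_int) hsq_int
      _ = (∫ s, (‖w‖ ^ 2 : ℝ) ∂μ) + (∫ s, 2 * θ * (inner ℝ w (Q s v - v) : ℝ) ∂μ)
            + θ ^ 2 * ∫ s, ‖Q s v - v‖ ^ 2 ∂μ := by
          rw [integral_add (integrable_const _) hinner_int]
          simp only [integral_const_mul]
      _ = ‖w‖ ^ 2 + θ ^ 2 * ∫ s, ‖Q s v - v‖ ^ 2 ∂μ := by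
          rw [integral_const]
          have : ∫ s, 2 * θ * (inner ℝ w (Q s v - v) : ℝ) ∂μ
              = 2 * θ * (inner ℝ w (∫ s, (Q s v - v) ∂μ) : ℝ) := by
            rw [integral_const_mul, integral_inner he_int]
          rw [this, he_mean]
          simp
  rw [hsplit]
  have hA : ∫ s, ‖Q s v - v‖ ^ 2 ∂μ ≤ ω * ‖v‖ ^ 2 := hconic v
  have hwexp : ‖w‖ ^ 2 = ‖u - ustar‖ ^ 2 + 2 * θ * (inner ℝ (u - ustar) v : ℝ)
      + θ ^ 2 * ‖v‖ ^ 2 := by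
    rw [hw, norm_add_sq_real, real_inner_smul_right, norm_smul]
    simp [Real.norm_eq_abs, mul_pow, sq_abs]
    ring
  have hbexp : ‖ubar - ustar‖ ^ 2 = ‖u - ustar‖ ^ 2 + 2 * (inner ℝ (u - ustar) v : ℝ)
      + ‖v‖ ^ 2 := by
    have : ubar - ustar = (u - ustar) + v := by rw [hv]; abel
    rw [this, norm_add_sq_real]
  have hωθ : ω / (1 + ω) = 1 - θ := by
    rw [hθ]; field_simp; ring
  rw [hbexp, hωθ, hwexp]
  have h2 : θ ^ 2 * ∫ s, ‖Q s v - v‖ ^ 2 ∂μ ≤ θ ^ 2 * (ω * ‖v‖ ^ 2) :=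
    mul_le_mul_of_nonneg_left hA (sq_nonneg θ)
  have h3 : θ ^ 2 * (ω * ‖v‖ ^ 2) = (θ - θ ^ 2) * ‖v‖ ^ 2 := by
    rw [hθ]; field_simp; ring
  nlinarith [h2, h3]
end

section
/- Let q ≥ 0 and consider u⁺ defined from u by u⁺ = u + (1/(1+q))·R(ū − u) where R is an unbiased random operator with E[R(v)] = v and E[‖R(v) − v‖²] ≤ q‖v‖². Then E[‖u⁺ − u⋆‖²] ≤ ‖u − u⋆‖² + (1/(1+q))(2⟨ū − u⋆, ū − u⟩ − ‖ū − u‖²) for all u, ū, u⋆ ∈ R^d. -/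
open MeasureTheory
open scoped InnerProductSpace

theorem compressed_dual_update_polarization (d : ℕ) {Ω : Type*} [MeasurableSpace Ω]
    (μ : Measure Ω) [IsProbabilityMeasure μ] (q : ℝ) (hq : 0 ≤ q)
    (R : Ω → EuclideanSpace ℝ (Fin d) → EuclideanSpace ℝ (Fin d))
    (hint : ∀ v, Integrable (fun s => R s v) μ)
    (hint2 : ∀ v, Integrable (fun s => ‖R s v - v‖ ^ 2) μ)
    (hunbiased : ∀ v, ∫ s, R s v ∂μ = v)
    (hconic : ∀ v, ∫ s, ‖R s v - v‖ ^ 2 ∂μ ≤ q * ‖v‖ ^ 2)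
    (u ubar ustar : EuclideanSpace ℝ (Fin d)) :
    ∫ s, ‖(u + (1 / (1 + q)) • R s (ubar - u)) - ustar‖ ^ 2 ∂μ
      ≤ ‖u - ustar‖ ^ 2
        + (1 / (1 + q)) * (2 * ⟪ubar - ustar, ubar - u⟫_ℝ - ‖ubar - u‖ ^ 2) := by
  set v : EuclideanSpace ℝ (Fin d) := ubar - u with hv
  set a : EuclideanSpace ℝ (Fin d) := u - ustar with ha
  set η : ℝ := 1 / (1 + q) with hη
  have hq1 : (0:ℝ) < 1 + q := by linarith
  have hηpos : 0 < η := by positivity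
  -- pointwise expansion
  have hpt : ∀ X : EuclideanSpace ℝ (Fin d),
      ‖(u + η • X) - ustar‖ ^ 2
        = ‖a‖ ^ 2 + (2 * η) * ⟪a, X⟫_ℝ + (η ^ 2) * ‖X - v‖ ^ 2
          + (2 * η ^ 2) * ⟪v, X - v⟫_ℝ + (η ^ 2) * ‖v‖ ^ 2 := by
    intro X
    have e1 : (u + η • X) - ustar = a + η • X := by rw [ha]; abel
    rw [e1, norm_add_sq_real, real_inner_smul_right, norm_smul]
    have e2 : ‖X‖ ^ 2 = ‖X - v‖ ^ 2 + 2 * ⟪v, X - v⟫_ℝ + ‖v‖ ^ 2 := by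
      have := norm_add_sq_real (X - v) v
      rw [sub_add_cancel] at this
      rw [this, real_inner_comm]
    rw [Real.norm_eq_abs, mul_pow, sq_abs, e2]
    ring
  have key : (fun s => ‖(u + η • R s v) - ustar‖ ^ 2)
      = fun s => ‖a‖ ^ 2 + (2 * η) * ⟪a, R s v⟫_ℝ + (η ^ 2) * ‖R s v - v‖ ^ 2
          + (2 * η ^ 2) * ⟪v, R s v - v⟫_ℝ + (η ^ 2) * ‖v‖ ^ 2 := by
    funext s; exact hpt (R s v)
  -- integrability pieces
  have i1 : Integrable (fun s => (2 * η) * ⟪a, R s v⟫_ℝ) μ :=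
    (((innerSL ℝ a).integrable_comp (hint v))).const_mul _
  have i2 : Integrable (fun s => (η ^ 2) * ‖R s v - v‖ ^ 2) μ := (hint2 v).const_mul _
  have i3 : Integrable (fun s => (2 * η ^ 2) * ⟪v, R s v - v⟫_ℝ) μ :=
    (((innerSL ℝ v).integrable_comp ((hint v).sub (integrable_const v)))).const_mul _
  have iR : Integrable (fun s => R s v - v) μ := (hint v).sub (integrable_const v)
  rw [key]
  have j1 : Integrable (fun s => ‖a‖ ^ 2 + (2 * η) * ⟪a, R s v⟫_ℝ) μ :=
    (integrable_const _).add i1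
  have j2 : Integrable (fun s => ‖a‖ ^ 2 + (2 * η) * ⟪a, R s v⟫_ℝ
      + (η ^ 2) * ‖R s v - v‖ ^ 2) μ := j1.add i2
  have j3 : Integrable (fun s => ‖a‖ ^ 2 + (2 * η) * ⟪a, R s v⟫_ℝ
      + (η ^ 2) * ‖R s v - v‖ ^ 2 + (2 * η ^ 2) * ⟪v, R s v - v⟫_ℝ) μ := j2.add i3
  rw [integral_add j3 (integrable_const ((η ^ 2) * ‖v‖ ^ 2)),
      integral_add j2 i3,
      integral_add j1 i2,
      integral_add (integrable_const (‖a‖ ^ 2)) i1,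
      integral_const, integral_const_mul, integral_const_mul, integral_const_mul,
      integral_const]
  simp only [measure_univ, probReal_univ, ENNReal.toReal_one, smul_eq_mul, one_mul]
  have e3 : ∫ s, ⟪a, R s v⟫_ℝ ∂μ = ⟪a, v⟫_ℝ := by
    rw [integral_inner (𝕜 := ℝ) (hint v) a, hunbiased v]
  have e4 : ∫ s, ⟪v, R s v - v⟫_ℝ ∂μ = 0 := by
    have := integral_inner (𝕜 := ℝ) iR v
    rw [this, integral_sub (hint v) (integrable_const v), integral_const,
      probReal_univ, one_smul, hunbiased v, sub_self, inner_zero_right]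
  rw [e3, e4]
  have hbound := hconic v
  have hinner : ⟪ubar - ustar, v⟫_ℝ = ⟪a, v⟫_ℝ + ‖v‖ ^ 2 := by
    have : ubar - ustar = a + v := by rw [ha, hv]; abel
    rw [this, inner_add_left, real_inner_self_eq_norm_sq]
  have hηq : η ^ 2 * (1 + q) = η := by
    rw [hη]; field_simp
  rw [hinner]
  nlinarith [sq_nonneg η, hηpos]
end
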